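/- Let f : T² → T² be the expanding endomorphism of T² = ℝ²/ℤ² induced by the integer matrix A with rows (6,3) and (3,3). Then for EVERY x ∈ T² (not just almost every), limsup_{r→0} τ(B(x,r))/(−log r) ≤ 2/log 9. -/

import Mathlib

open MeasureTheory Filter Metric Set
open scoped NNReal ENNReal ENat Topology

noncomputable section

/-- The first return time (Poincaré recurrence) of a set `A` under a map `f`:
`τ(A) = min {k > 0 : f^k(A) ∩ A ≠ ∅}`, with value `⊤ = ∞` if no such `k` exists. -/
def tau {X : Type*} (f : X → X) (A : Set X) : ℕ∞ :=
  ⨅ (k : ℕ) (_ : 0 < k ∧ ((f^[k]) '' A ∩ A).Nonempty), (k : ℕ∞)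

/-- The integer lattice ℤ^d inside Euclidean space ℝ^d. -/
def intLattice (d : ℕ) : AddSubgroup (EuclideanSpace ℝ (Fin d)) where
  carrier := {x | ∀ i, ∃ m : ℤ, x i = (m : ℝ)}
  zero_mem' := fun i => ⟨0, by simp⟩
  add_mem' := by
    rintro a b ha hb i
    obtain ⟨m, hm⟩ := ha i
    obtain ⟨n, hn⟩ := hb i
    exact ⟨m + n, by push_cast [PiLp.add_apply, hm, hn]; ring⟩
  neg_mem' := by
    rintro a ha i
    obtain ⟨m, hm⟩ := ha i
    exact ⟨-m, by push_cast [PiLp.neg_apply, hm]; ring⟩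

instance intLattice_isClosed (d : ℕ) :
    IsClosed ((intLattice d : AddSubgroup (EuclideanSpace ℝ (Fin d))) :
      Set (EuclideanSpace ℝ (Fin d))) := by
  have h1 : ((intLattice d : AddSubgroup (EuclideanSpace ℝ (Fin d))) :
        Set (EuclideanSpace ℝ (Fin d)))
      = ⋂ i, (fun x : EuclideanSpace ℝ (Fin d) => x i) ⁻¹' (Set.range ((↑) : ℤ → ℝ)) := by
    ext x
    simp [intLattice, AddSubgroup.mem_carrier, eq_comm]
  rw [h1]
  refine isClosed_iInter fun i => IsClosed.preimage ?_ ?_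
  · exact (EuclideanSpace.proj i : EuclideanSpace ℝ (Fin d) →L[ℝ] ℝ).continuous
  · exact Int.isClosedEmbedding_coe_real.isClosed_range

/-- The d-dimensional torus ℝ^d/ℤ^d.  As a quotient of the Euclidean space ℝ^d by the
(closed) subgroup ℤ^d it carries the quotient metric
`d(x,y) = inf_{m ∈ ℤ^d} ‖x' - y' - m‖` induced by the Euclidean norm. -/
abbrev Torus (d : ℕ) := EuclideanSpace ℝ (Fin d) ⧸ intLattice d

/-- A real d×d matrix seen as a continuous linear map on Euclidean space ℝ^d. -/
def matCLM {d : ℕ} (A : Matrix (Fin d) (Fin d) ℝ) :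
    EuclideanSpace ℝ (Fin d) →L[ℝ] EuclideanSpace ℝ (Fin d) :=
  LinearMap.toContinuousLinearMap (Matrix.toEuclideanLin A)

theorem intLattice_mapsTo {d : ℕ} (A : Matrix (Fin d) (Fin d) ℤ) :
    intLattice d ≤ (intLattice d).comap
      ((matCLM (A.map (Int.cast : ℤ → ℝ))).toLinearMap.toAddMonoidHom) := by
  intro x hx
  choose m hm using hx
  intro i
  refine ⟨∑ j, A i j * m j, ?_⟩
  have hx' : (matCLM (A.map (Int.cast : ℤ → ℝ))) x i
      = ∑ j, (A i j : ℝ) * x j := by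
    simp [matCLM, Matrix.toEuclideanLin, Matrix.mulVec, dotProduct]
  show (matCLM (A.map (Int.cast : ℤ → ℝ))) x i = _
  rw [hx']
  push_cast
  exact Finset.sum_congr rfl fun j _ => by rw [hm j]

/-- The endomorphism of the torus T^d induced by an integer matrix A, i.e. x ↦ Ax (mod ℤ^d). -/
def toralMap {d : ℕ} (A : Matrix (Fin d) (Fin d) ℤ) : Torus d → Torus d :=
  QuotientAddGroup.map (intLattice d) (intLattice d)
    ((matCLM (A.map (Int.cast : ℤ → ℝ))).toLinearMap.toAddMonoidHom)
    (intLattice_mapsTo A)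

/-- Haar (Lebesgue) probability measure on the torus T^d: the pushforward under the quotient
map of Lebesgue measure restricted to the fundamental domain [0,1)^d. -/
def torusMeasure (d : ℕ) : Measure (Torus d) :=
  Measure.map (QuotientAddGroup.mk)
    (volume.restrict {x : EuclideanSpace ℝ (Fin d) | ∀ i, x i ∈ Set.Ico (0:ℝ) 1})

/-- The matrix A with rows (6,3) and (3,3). -/
def A63 : Matrix (Fin 2) (Fin 2) ℤ := !![6,3;3,3]

/-!
Since `A = 3 F` with `F = [[2,1],[1,1]]` invertible over `ℤ`, we have `f^k = f_{3^k F^k}`. Lifting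
`x` to `x̃ ∈ ℝ²`, the point `y = (F^{-k} x̃ - z) / 3^k`, with `z ∈ ℤ²` a rounding of
`F^{-k} x̃ - 3^k x̃`, satisfies `f^k y = x` and `d(y, x) ≤ √2 / (2 · 3^k) < 3^{-k}`. Hence
`τ(B(x, r)) ≤ k` as soon as `3^{-k} ≤ r`, i.e. `τ(B(x, r)) ≤ ⌈-log r / log 3⌉`, and
`1 / log 3 = 2 / log 9`.
-/

lemma matCLM_apply {d : ℕ} (M : Matrix (Fin d) (Fin d) ℝ) (x : EuclideanSpace ℝ (Fin d)) :
    matCLM M x = WithLp.toLp 2 (M.mulVec x.ofLp) := by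
  simp [matCLM, Matrix.toLpLin_apply]

lemma matCLM_mul {d : ℕ} (M N : Matrix (Fin d) (Fin d) ℝ) (x : EuclideanSpace ℝ (Fin d)) :
    matCLM (M * N) x = matCLM M (matCLM N x) := by
  simp [matCLM_apply, Matrix.mulVec_mulVec]

lemma matCLM_one {d : ℕ} (x : EuclideanSpace ℝ (Fin d)) : matCLM 1 x = x := by
  simp [matCLM_apply]

lemma matCLM_smul {d : ℕ} (c : ℝ) (M : Matrix (Fin d) (Fin d) ℝ) (x : EuclideanSpace ℝ (Fin d)) :
    matCLM (c • M) x = c • matCLM M x := by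
  simp [matCLM_apply, Matrix.smul_mulVec]

lemma toralMap_mk {d : ℕ} (A : Matrix (Fin d) (Fin d) ℤ) (x : EuclideanSpace ℝ (Fin d)) :
    toralMap A x = (matCLM (A.map (Int.cast : ℤ → ℝ)) x : Torus d) :=
  rfl

lemma toralMap_iterate {d : ℕ} (A : Matrix (Fin d) (Fin d) ℤ) (k : ℕ) :
    (toralMap A)^[k] = toralMap (A ^ k) := by
  induction k with
  | zero =>
    funext y
    induction y using QuotientAddGroup.induction_on
    simp [toralMap_mk, matCLM_one]
  | succ k ih =>
    funext y
    induction y using QuotientAddGroup.induction_on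
    have hmap : (A * A ^ k).map (Int.cast : ℤ → ℝ) = A.map Int.cast * (A ^ k).map Int.cast :=
      Matrix.map_mul (f := Int.castRingHom ℝ)
    rw [Function.iterate_succ_apply', ih, toralMap_mk, toralMap_mk, toralMap_mk, pow_succ', hmap,
      matCLM_mul]

lemma exists_mem_intLattice_norm_sub_le {d : ℕ} (v : EuclideanSpace ℝ (Fin d)) :
    ∃ z ∈ intLattice d, ‖v - z‖ ≤ √d / 2 := by
  refine ⟨WithLp.toLp 2 fun i => (round (v i) : ℝ), fun i => ⟨round (v i), rfl⟩, ?_⟩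
  have hcoord : ∀ i, ‖(v - WithLp.toLp 2 fun i => (round (v i) : ℝ)) i‖ ^ 2 ≤ (1 / 2) ^ 2 :=
    fun i => pow_le_pow_left₀ (norm_nonneg _) (abs_sub_round (v i)) 2
  calc ‖v - WithLp.toLp 2 fun i => (round (v i) : ℝ)‖
      ≤ √(∑ _i : Fin d, (1 / 2 : ℝ) ^ 2) := by
        rw [EuclideanSpace.norm_eq]
        exact Real.sqrt_le_sqrt (Finset.sum_le_sum fun i _ => hcoord i)
    _ = √d / 2 := by
        rw [Finset.sum_const, Finset.card_univ, Fintype.card_fin, nsmul_eq_mul, Real.sqrt_mul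
          (Nat.cast_nonneg d), Real.sqrt_sq (by norm_num)]
        ring

lemma dist_mk_le {d : ℕ} (x y : EuclideanSpace ℝ (Fin d)) :
    dist (x : Torus d) y ≤ ‖x - y‖ := by
  rw [dist_eq_norm, ← QuotientAddGroup.mk_sub]
  exact QuotientAddGroup.norm_mk_le_norm

lemma exists_toralMap_smul_eq_dist_le {d : ℕ} {G H : Matrix (Fin d) (Fin d) ℤ} (hGH : G * H = 1)
    {m : ℕ} (hm : 0 < m) (x : Torus d) :
    ∃ y, toralMap (m • G) y = x ∧ dist y x ≤ √d / (2 * m) := by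
  obtain ⟨x, rfl⟩ := QuotientAddGroup.mk_surjective x
  set g := matCLM (G.map (Int.cast : ℤ → ℝ))
  set u := matCLM (H.map (Int.cast : ℤ → ℝ)) x
  have hgu : g u = x := by
    have hmap : (G * H).map (Int.cast : ℤ → ℝ) = G.map Int.cast * H.map Int.cast :=
      Matrix.map_mul (f := Int.castRingHom ℝ)
    rw [← matCLM_mul, ← hmap, hGH, Matrix.map_one Int.cast Int.cast_zero Int.cast_one, matCLM_one]
  obtain ⟨z, hz, hdist⟩ := exists_mem_intLattice_norm_sub_le (u - (m : ℝ) • x)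
  have hm' : (m : ℝ) ≠ 0 := by positivity
  refine ⟨((m : ℝ)⁻¹ • (u - z) : EuclideanSpace ℝ (Fin d)), ?_, ?_⟩
  · have hsmul : (m • G).map (Int.cast : ℤ → ℝ) = (m : ℝ) • G.map Int.cast := by
      ext i j
      rw [Matrix.map_apply, Matrix.smul_apply, Matrix.smul_apply, Matrix.map_apply, nsmul_eq_mul,
        smul_eq_mul, Int.cast_mul, Int.cast_natCast]
    rw [toralMap_mk, hsmul, matCLM_smul, map_smul, smul_smul, mul_inv_cancel₀ hm', one_smul,
      map_sub, hgu, QuotientAddGroup.eq]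
    simpa using (intLattice d).neg_mem (intLattice_mapsTo G hz)
  · calc dist (((m : ℝ)⁻¹ • (u - z) : EuclideanSpace ℝ (Fin d)) : Torus d) x
        ≤ ‖(m : ℝ)⁻¹ • (u - z) - x‖ := dist_mk_le _ _
      _ = (m : ℝ)⁻¹ * ‖u - (m : ℝ) • x - z‖ := by
        rw [← norm_smul_of_nonneg (by positivity), smul_sub, smul_sub, smul_sub, smul_smul,
          inv_mul_cancel₀ hm', one_smul]
        abel_nf
      _ ≤ (m : ℝ)⁻¹ * (√d / 2) := by gcongr
      _ = √d / (2 * m) := by field_simp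

lemma tau_le_of_iterate_mem {X : Type*} {f : X → X} {A : Set X} {k : ℕ} (hk : 0 < k) {y : X}
    (hy : y ∈ A) (hfy : f^[k] y ∈ A) : tau f A ≤ k :=
  iInf₂_le k ⟨hk, f^[k] y, ⟨y, hy, rfl⟩, hfy⟩

lemma limsup_div_neg_log_le {g : ℝ → ℕ∞} {c : ℝ} (hc : 1 < c)
    (hg : ∀ (r : ℝ) (k : ℕ), 0 < k → (c ^ k)⁻¹ ≤ r → g r ≤ k) :
    limsup (fun r => (g r : ℝ≥0∞) / ENNReal.ofReal (-Real.log r)) (𝓝[>] 0)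
      ≤ ENNReal.ofReal (1 / Real.log c) := by
  have hlogc : 0 < Real.log c := Real.log_pos hc
  have hbound : ∀ᶠ r in 𝓝[>] 0, (g r : ℝ≥0∞) / ENNReal.ofReal (-Real.log r)
      ≤ ENNReal.ofReal (1 / Real.log c + (-Real.log r)⁻¹) := by
    filter_upwards [Ioo_mem_nhdsGT one_pos] with r ⟨hr0, hr1⟩
    set t := -Real.log r
    have ht : 0 < t := neg_pos.2 (Real.log_neg hr0 hr1)
    set k := ⌈t / Real.log c⌉₊
    have htk : t ≤ k * Real.log c := (div_le_iff₀ hlogc).1 (Nat.le_ceil _)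
    have hk : 0 < k := Nat.ceil_pos.2 (div_pos ht hlogc)
    have hkr : (c ^ k)⁻¹ ≤ r := by
      rw [← Real.exp_log hr0, ← Real.exp_log (pow_pos (zero_lt_one.trans hc) k), ← Real.exp_neg,
        Real.log_pow]
      exact Real.exp_le_exp.2 (by linarith)
    have hkt : (k : ℝ) / t ≤ 1 / Real.log c + t⁻¹ := by
      have hk1 : (k : ℝ) ≤ t / Real.log c + 1 := (Nat.ceil_lt_add_one (by positivity)).le
      calc (k : ℝ) / t ≤ (t / Real.log c + 1) / t := by gcongr
        _ = 1 / Real.log c + t⁻¹ := by field_simp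
    calc (g r : ℝ≥0∞) / ENNReal.ofReal t ≤ (k : ℝ≥0∞) / ENNReal.ofReal t := by
          gcongr
          exact_mod_cast hg r k hk hkr
      _ = ENNReal.ofReal (k / t) := by rw [ENNReal.ofReal_div_of_pos ht, ENNReal.ofReal_natCast]
      _ ≤ ENNReal.ofReal (1 / Real.log c + t⁻¹) := ENNReal.ofReal_le_ofReal hkt
  have hlim : Tendsto (fun r => ENNReal.ofReal (1 / Real.log c + (-Real.log r)⁻¹)) (𝓝[>] 0)
      (𝓝 (ENNReal.ofReal (1 / Real.log c))) := by
    have hinv : Tendsto (fun r => (-Real.log r)⁻¹) (𝓝[>] 0) (𝓝 0) :=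
      (tendsto_neg_atBot_atTop.comp Real.tendsto_log_nhdsGT_zero).inv_tendsto_atTop
    simpa [Function.comp_def] using
      (ENNReal.continuous_ofReal.tendsto _).comp (tendsto_const_nhds.add hinv)
  calc _ ≤ limsup (fun r => ENNReal.ofReal (1 / Real.log c + (-Real.log r)⁻¹)) (𝓝[>] 0) :=
        limsup_le_limsup hbound
    _ = ENNReal.ofReal (1 / Real.log c) := hlim.limsup_eq

def catMatrix : Matrix (Fin 2) (Fin 2) ℤ := !![2,1;1,1]

def catMatrixInv : Matrix (Fin 2) (Fin 2) ℤ := !![1,-1;-1,2]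

lemma catMatrix_mul_inv : catMatrix * catMatrixInv = 1 := by
  simp [catMatrix, catMatrixInv, Matrix.one_fin_two]

lemma catMatrix_pow_mul_inv_pow (k : ℕ) : catMatrix ^ k * catMatrixInv ^ k = 1 := by
  have hcomm : Commute catMatrix catMatrixInv := by
    rw [Commute, SemiconjBy, catMatrix_mul_inv]
    simp [catMatrix, catMatrixInv, Matrix.one_fin_two]
  rw [← hcomm.mul_pow, catMatrix_mul_inv, one_pow]

lemma A63_pow (k : ℕ) : A63 ^ k = 3 ^ k • catMatrix ^ k := by
  rw [show A63 = 3 • catMatrix by simp [A63, catMatrix, Matrix.smul_of], smul_pow]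

lemma tau_A63_ball_le (x : Torus 2) {r : ℝ} {k : ℕ} (hk : 0 < k) (hr : ((3 : ℝ) ^ k)⁻¹ ≤ r) :
    tau (toralMap A63) (ball x r) ≤ k := by
  obtain ⟨y, hyx, hdist⟩ :=
    exists_toralMap_smul_eq_dist_le (catMatrix_pow_mul_inv_pow k) (pow_pos three_pos k) x
  refine tau_le_of_iterate_mem hk (y := y) ?_ ?_
  · rw [mem_ball]
    calc dist y x ≤ √(2 : ℕ) / (2 * ((3 ^ k : ℕ) : ℝ)) := hdist
      _ < ((3 : ℝ) ^ k)⁻¹ := by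
        have : √(2 : ℝ) < 2 := by norm_num [Real.sqrt_lt']
        push_cast
        rw [div_lt_iff₀ (by positivity)]
        field_simp
        linarith
      _ ≤ r := hr
  · rw [toralMap_iterate, A63_pow, hyx]
    exact mem_ball_self ((inv_pos.2 (by positivity)).trans_le hr)

/-- For the expanding toral endomorphism of T² induced by `A = [[6,3],[3,3]]`, for EVERY
point x ∈ T² one has `limsup_{r→0} τ(B(x,r))/(-log r) ≤ 2/log 9`. -/
theorem statement1 (x : Torus 2) :
    limsup (fun r : ℝ =>
        (tau (toralMap A63) (ball x r) : ℝ≥0∞) / ENNReal.ofReal (-Real.log r))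
      (𝓝[>] (0:ℝ)) ≤ ENNReal.ofReal (2 / Real.log 9) := by
  have hlog9 : 2 / Real.log 9 = 1 / Real.log 3 := by
    rw [show (9 : ℝ) = 3 ^ 2 by norm_num, Real.log_pow]
    push_cast
    field_simp
  rw [hlog9]
  exact limsup_div_neg_log_le (by norm_num) fun _ _ => tau_A63_ball_le x
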